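/- arXiv:2107.01336 — 2 statements merged into one kernel-verified Lean document; each statement's English description precedes it below -/
import Mathlib

section
/- Let T be a bounded linear operator on H admitting an A-adjoint T♯. Then w_A(T) ≥ ‖T‖_A/2 + |‖Re_A(T)‖_A − ‖Im_A(T)‖_A|/2. -/
noncomputable section

open Complex ContinuousLinearMap

variable {H : Type*} [NormedAddCommGroup H] [InnerProductSpace ℂ H] [CompleteSpace H]

/-- The `A`-inner product `⟨x, y⟩_A = ⟨A x, y⟩`. -/
def innA (A : H →L[ℂ] H) (x y : H) : ℂ := @inner ℂ _ _ (A x) y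

/-- The `A`-seminorm `‖x‖_A = √⟨A x, x⟩`. -/
def vnormA (A : H →L[ℂ] H) (x : H) : ℝ := Real.sqrt (innA A x x).re

/-- The `A`-operator seminorm `‖T‖_A = sup {‖T x‖_A : ‖x‖_A = 1}`. -/
def opnormA (A T : H →L[ℂ] H) : ℝ :=
  sSup {r : ℝ | ∃ x : H, vnormA A x = 1 ∧ r = vnormA A (T x)}

/-- The `A`-numerical radius `w_A(T) = sup {|⟨T x, x⟩_A| : ‖x‖_A = 1}`. -/
def wA (A T : H →L[ℂ] H) : ℝ :=
  sSup {r : ℝ | ∃ x : H, vnormA A x = 1 ∧ r = ‖innA A (T x) x‖}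

/-- The `A`-numerical range `W_A(T) = {⟨T x, x⟩_A : ‖x‖_A = 1}`. -/
def WA (A T : H →L[ℂ] H) : Set ℂ :=
  {z : ℂ | ∃ x : H, vnormA A x = 1 ∧ z = innA A (T x) x}

/-- `Re_A(T) = (T + T♯)/2`, given an `A`-adjoint `Ts` of `T`. -/
def ReA (T Ts : H →L[ℂ] H) : H →L[ℂ] H := (2 : ℂ)⁻¹ • (T + Ts)

/-- `Im_A(T) = (T - T♯)/(2i)`, given an `A`-adjoint `Ts` of `T`. -/
def ImA (T Ts : H →L[ℂ] H) : H →L[ℂ] H := (2 * Complex.I)⁻¹ • (T - Ts)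

/-- `Ts` is an `A`-adjoint of `T`, i.e. `A ∘ Ts = T* ∘ A`. -/
def IsAAdjoint (A T Ts : H →L[ℂ] H) : Prop :=
  A.comp Ts = (ContinuousLinearMap.adjoint T).comp A


/-!
Write `A = R† R` (a positive operator is a `star b * b` in the C⋆-algebra `B(H)`), so that
`⟨x, y⟩_A = ⟪R x, R y⟫` and `‖x‖_A = ‖R x‖`. If `T♯` is an `A`-adjoint of `T`, then `Re_A(T)` and
`Im_A(T)` are `A`-selfadjoint with `⟨Re_A(T) x, x⟩_A = Re ⟨T x, x⟩_A` and
`⟨Im_A(T) x, x⟩_A = -Im ⟨T x, x⟩_A`. For an `A`-selfadjoint `S`, polarization and the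
parallelogram law give `‖S x‖_A ≤ sup |⟨S u, u⟩_A|` on the `A`-unit sphere, so `‖Re_A(T)‖_A` and
`‖Im_A(T)‖_A` are at most `w_A(T)`. Since `T = Re_A(T) + i Im_A(T)`, also
`‖T‖_A ≤ ‖Re_A(T)‖_A + ‖Im_A(T)‖_A`, and the right-hand side of the claim is at most
`max (‖Re_A(T)‖_A, ‖Im_A(T)‖_A) ≤ w_A(T)`.

The suprema are real `sSup`s, which are junk (`0`) unless bounded, so one also needs that an
operator with an `A`-adjoint is bounded for `‖·‖_A`; this follows from Krein's trick applied to
the `A`-selfadjoint operator `T♯ T`.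
-/

open scoped InnerProductSpace

lemma le_of_forall_pow_two_pow_le_mul_pow {a b C : ℝ} (hb : 0 ≤ b)
    (h : ∀ n : ℕ, a ^ 2 ^ n ≤ C * b ^ 2 ^ n) : a ≤ b := by
  by_contra! hba
  have ha : 0 < a := hb.trans_lt hba
  rcases hb.eq_or_lt with rfl | hb
  · simpa [ha.not_ge] using h 0
  obtain ⟨n, hn⟩ := pow_unbounded_of_one_lt C ((one_lt_div hb).2 hba)
  have : (a / b) ^ 2 ^ n ≤ C := by
    rw [div_pow, div_le_iff₀ (by positivity)]; exact h n
  have := pow_le_pow_right₀ ((one_lt_div hb).2 hba).le (Nat.lt_two_pow_self (n := n)).le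
  linarith

section

open RCLike

variable {𝕜 E F : Type*} [RCLike 𝕜] [NormedAddCommGroup E] [NormedSpace 𝕜 E]
  [NormedAddCommGroup F] [InnerProductSpace 𝕜 F]

/-- `T` and `Ts` are adjoint for the semi-inner product `⟪R x, R y⟫`; for `A = R† R` this is the
`A`-inner product. -/
def IsAdjointWrt (R : E →L[𝕜] F) (T Ts : E →L[𝕜] E) : Prop :=
  ∀ x y, ⟪R (T x), R y⟫_𝕜 = ⟪R x, R (Ts y)⟫_𝕜

lemma norm_inner_le_mul_norm_sq {R : E →L[𝕜] F} {T : E →L[𝕜] E} {w : ℝ}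
    (hw : ∀ x, ‖R x‖ = 1 → ‖⟪R (T x), R x⟫_𝕜‖ ≤ w) (u : E) :
    ‖⟪R (T u), R u⟫_𝕜‖ ≤ w * ‖R u‖ ^ 2 := by
  rcases (norm_nonneg (R u)).eq_or_lt with hu | hu
  · simp [norm_eq_zero.1 hu.symm]
  have hunit : ‖R ((‖R u‖⁻¹ : 𝕜) • u)‖ = 1 := by
    rw [map_smul, norm_smul, norm_inv, RCLike.norm_ofReal, abs_norm, inv_mul_cancel₀ hu.ne']
  have := hw _ hunit
  simp only [map_smul, inner_smul_left, inner_smul_right, norm_mul, RCLike.norm_conj, norm_inv,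
    RCLike.norm_ofReal, abs_norm] at this
  rwa [← mul_assoc, ← sq, inv_pow, inv_mul_le_iff₀ (by positivity), mul_comm] at this

namespace IsAdjointWrt

variable {R : E →L[𝕜] F} {T Ts S : E →L[𝕜] E}

lemma symm (h : IsAdjointWrt R T Ts) : IsAdjointWrt R Ts T := fun x y => by
  rw [← inner_conj_symm, ← h, inner_conj_symm]

lemma adjoint_mul_self (h : IsAdjointWrt R T Ts) : IsAdjointWrt R (Ts * T) (Ts * T) := fun x y => by
  simp only [mul_apply_eq_comp, h.symm (T x), h x]

lemma pow (h : IsAdjointWrt R S S) (n : ℕ) : IsAdjointWrt R (S ^ n) (S ^ n) := by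
  induction n with
  | zero => simp [IsAdjointWrt]
  | succ n ih =>
    intro x y
    rw [pow_succ, mul_apply_eq_comp, ih, h, ← mul_apply_eq_comp S (S ^ n), ← pow_succ', pow_succ]

lemma norm_sq_le (h : IsAdjointWrt R T Ts) (x : E) :
    ‖R (T x)‖ ^ 2 ≤ ‖R x‖ * ‖R (Ts (T x))‖ := by
  rw [← inner_self_eq_norm_sq (𝕜 := 𝕜), h]
  exact (RCLike.re_le_norm _).trans (norm_inner_le_norm _ _)

lemma norm_apply_le_opNorm (h : IsAdjointWrt R S S) {x : E} (hx : ‖R x‖ = 1) :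
    ‖R (S x)‖ ≤ ‖S‖ := by
  -- Krein's trick: iterating Cauchy–Schwarz, `‖R (S x)‖ ^ 2 ^ n ≤ ‖R (S ^ 2 ^ n x)‖`, and the
  -- right-hand side grows at most like `‖S‖ ^ 2 ^ n`.
  have hpow : ∀ n : ℕ, ‖R (S x)‖ ^ 2 ^ n ≤ ‖R ((S ^ 2 ^ n) x)‖ := by
    intro n
    induction n with
    | zero => simp
    | succ n ih =>
      calc ‖R (S x)‖ ^ 2 ^ (n + 1) = (‖R (S x)‖ ^ 2 ^ n) ^ 2 := by ring
        _ ≤ ‖R ((S ^ 2 ^ n) x)‖ ^ 2 := by gcongr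
        _ ≤ ‖R x‖ * ‖R ((S ^ 2 ^ n) ((S ^ 2 ^ n) x))‖ := (h.pow _).norm_sq_le x
        _ = ‖R ((S ^ 2 ^ (n + 1)) x)‖ := by
          rw [hx, one_mul, ← mul_apply_eq_comp, ← pow_add, pow_succ, mul_two]
  refine le_of_forall_pow_two_pow_le_mul_pow (norm_nonneg S) (C := ‖R‖ * ‖x‖) fun n => ?_
  calc ‖R (S x)‖ ^ 2 ^ n ≤ ‖R ((S ^ 2 ^ n) x)‖ := hpow n
    _ ≤ ‖R‖ * (‖S ^ 2 ^ n‖ * ‖x‖) := (R.le_opNorm _).trans (by gcongr; exact le_opNorm _ _)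
    _ ≤ ‖R‖ * (‖S‖ ^ 2 ^ n * ‖x‖) := by gcongr; exact norm_pow_le' S (by positivity)
    _ = ‖R‖ * ‖x‖ * ‖S‖ ^ 2 ^ n := by ring

lemma norm_apply_le_sqrt (h : IsAdjointWrt R T Ts) {x : E} (hx : ‖R x‖ = 1) :
    ‖R (T x)‖ ≤ √‖Ts * T‖ := by
  rw [← Real.sqrt_sq (norm_nonneg (R (T x)))]
  gcongr
  calc ‖R (T x)‖ ^ 2 ≤ ‖R x‖ * ‖R (Ts (T x))‖ := h.norm_sq_le x
    _ = ‖R ((Ts * T) x)‖ := by rw [hx, one_mul, mul_apply_eq_comp]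
    _ ≤ ‖Ts * T‖ := h.adjoint_mul_self.norm_apply_le_opNorm hx

lemma two_mul_re_inner_le (h : IsAdjointWrt R S S) {w : ℝ}
    (hw : ∀ u, ‖⟪R (S u), R u⟫_𝕜‖ ≤ w * ‖R u‖ ^ 2) (x y : E) :
    2 * re ⟪R (S x), R y⟫_𝕜 ≤ w * (‖R x‖ ^ 2 + ‖R y‖ ^ 2) := by
  have hsymm : re ⟪R (S y), R x⟫_𝕜 = re ⟪R (S x), R y⟫_𝕜 := by
    rw [h, ← inner_conj_symm (R y), RCLike.conj_re]
  have hpolar : re ⟪R (S (x + y)), R (x + y)⟫_𝕜 - re ⟪R (S (x - y)), R (x - y)⟫_𝕜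
      = 4 * re ⟪R (S x), R y⟫_𝕜 := by
    simp only [map_add, map_sub, inner_add_left, inner_add_right, inner_sub_left,
      inner_sub_right, hsymm]
    ring
  have hplus := (RCLike.re_le_norm _).trans (hw (x + y))
  have hminus := ((neg_le_abs _).trans (RCLike.abs_re_le_norm _)).trans (hw (x - y))
  have hpar : ‖R (x + y)‖ ^ 2 + ‖R (x - y)‖ ^ 2 = 2 * (‖R x‖ ^ 2 + ‖R y‖ ^ 2) := by
    simpa only [map_add, map_sub] using parallelogram_law_with_norm 𝕜 (R x) (R y)
  linear_combination (hplus + hminus - hpolar + w * hpar) / 2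

lemma norm_apply_le_of_norm_inner_le (h : IsAdjointWrt R S S) {w : ℝ}
    (hw : ∀ u, ‖⟪R (S u), R u⟫_𝕜‖ ≤ w * ‖R u‖ ^ 2) {x : E} (hx : ‖R x‖ = 1) :
    ‖R (S x)‖ ≤ w := by
  rcases (norm_nonneg (R (S x))).eq_or_lt with hSx | hSx
  · rw [← hSx]; simpa [hx] using (norm_nonneg _).trans (hw x)
  -- test the bound against the `R`-unit vector `y = S x / ‖R (S x)‖`
  set t := ‖R (S x)‖⁻¹
  have ht : t * ‖R (S x)‖ = 1 := inv_mul_cancel₀ hSx.ne'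
  have hy : ‖R ((t : 𝕜) • S x)‖ = 1 := by
    rwa [map_smul, norm_smul, RCLike.norm_ofReal, abs_of_pos (inv_pos.2 hSx)]
  have hre : re ⟪R (S x), R ((t : 𝕜) • S x)⟫_𝕜 = ‖R (S x)‖ := by
    rw [map_smul, inner_smul_right, inner_self_eq_norm_sq_to_K, RCLike.re_ofReal_mul,
      ← RCLike.ofReal_pow, RCLike.ofReal_re, sq, ← mul_assoc, ht, one_mul]
  have := h.two_mul_re_inner_le hw x ((t : 𝕜) • S x)
  rw [hre, hx, hy] at this
  linarith

end IsAdjointWrt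
end

section

variable {E F : Type*} [NormedAddCommGroup E] [InnerProductSpace ℂ E]
  [NormedAddCommGroup F] [InnerProductSpace ℂ F]

lemma reA_add_I_smul_imA (T Ts : E →L[ℂ] E) : ReA T Ts + I • ImA T Ts = T := by
  ext x
  have hI : I * (2 * I)⁻¹ = 2⁻¹ := by field_simp
  simp only [ReA, ImA, add_apply, smul_apply, sub_apply, smul_smul, hI]
  module

lemma opnormA_nonneg (A S : E →L[ℂ] E) : 0 ≤ opnormA A S :=
  Real.sSup_nonneg <| by rintro _ ⟨x, -, rfl⟩; exact Real.sqrt_nonneg _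

lemma wA_nonneg (A T : E →L[ℂ] E) : 0 ≤ wA A T :=
  Real.sSup_nonneg <| by rintro _ ⟨x, -, rfl⟩; exact norm_nonneg _

namespace IsAdjointWrt

variable {R : E →L[ℂ] F} {T Ts : E →L[ℂ] E}

lemma reA (h : IsAdjointWrt R T Ts) : IsAdjointWrt R (ReA T Ts) (ReA T Ts) := fun x y => by
  simp only [ReA, smul_apply, add_apply, map_smul, map_add, inner_smul_left, inner_smul_right,
    inner_add_left, inner_add_right, h x y, h.symm x y]
  rw [map_inv₀, map_ofNat, add_comm]

lemma imA (h : IsAdjointWrt R T Ts) : IsAdjointWrt R (ImA T Ts) (ImA T Ts) := fun x y => by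
  simp only [ImA, smul_apply, sub_apply, map_smul, map_sub, inner_smul_left, inner_smul_right,
    inner_sub_left, inner_sub_right, h x y, h.symm x y]
  rw [map_inv₀, map_mul, map_ofNat, conj_I]
  ring

lemma inner_reA_apply (h : IsAdjointWrt R T Ts) (x : E) :
    ⟪R (ReA T Ts x), R x⟫_ℂ = (⟪R (T x), R x⟫_ℂ).re := by
  simp only [ReA, smul_apply, add_apply, map_smul, map_add, inner_smul_left, inner_add_left,
    h.symm x x, ← inner_conj_symm (R x) (R (T x)), add_conj, map_inv₀, map_ofNat]
  push_cast
  ring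

lemma inner_imA_apply (h : IsAdjointWrt R T Ts) (x : E) :
    ⟪R (ImA T Ts x), R x⟫_ℂ = -(⟪R (T x), R x⟫_ℂ).im := by
  simp only [ImA, smul_apply, sub_apply, map_smul, map_sub, inner_smul_left, inner_sub_left,
    h.symm x x, ← inner_conj_symm (R x) (R (T x)), sub_conj, map_inv₀, map_mul, map_ofNat, conj_I]
  field_simp
  push_cast
  ring

end IsAdjointWrt

end

section

variable {K : Type*} [NormedAddCommGroup K] [InnerProductSpace ℂ K] [CompleteSpace K]

lemma exists_eq_adjoint_comp_self {A : H →L[ℂ] H} (hA : A.IsPositive) :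
    ∃ R : H →L[ℂ] H, A = adjoint R ∘L R :=
  CStarAlgebra.nonneg_iff_eq_star_mul_self.1 ((nonneg_iff_isPositive A).2 hA)

lemma innA_adjoint_comp_self (R : H →L[ℂ] K) (x y : H) :
    innA (adjoint R ∘L R) x y = ⟪R x, R y⟫_ℂ :=
  adjoint_inner_left R y (R x)

lemma vnormA_adjoint_comp_self (R : H →L[ℂ] K) (x : H) : vnormA (adjoint R ∘L R) x = ‖R x‖ := by
  rw [vnormA, innA_adjoint_comp_self, ← RCLike.re_to_complex, inner_self_eq_norm_sq,
    Real.sqrt_sq (norm_nonneg _)]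

lemma IsAAdjoint.isAdjointWrt {R : H →L[ℂ] K} {T Ts : H →L[ℂ] H}
    (h : IsAAdjoint (adjoint R ∘L R) T Ts) : IsAdjointWrt R T Ts := fun x y => by
  have hy : adjoint R (R (Ts y)) = adjoint T (adjoint R (R y)) := congr($h y)
  rw [← adjoint_inner_right R (T x), ← adjoint_inner_right T x, ← hy, adjoint_inner_right]

section Suprema

variable {R : H →L[ℂ] K} {S T Ts : H →L[ℂ] H} {b : ℝ}

lemma opnormA_adjoint_comp_self_le (hb : 0 ≤ b) (h : ∀ x, ‖R x‖ = 1 → ‖R (S x)‖ ≤ b) :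
    opnormA (adjoint R ∘L R) S ≤ b := by
  refine Real.sSup_le ?_ hb
  rintro _ ⟨x, hx, rfl⟩
  rw [vnormA_adjoint_comp_self] at hx ⊢
  exact h x hx

lemma norm_apply_le_opnormA (h : ∀ x, ‖R x‖ = 1 → ‖R (S x)‖ ≤ b) {x : H} (hx : ‖R x‖ = 1) :
    ‖R (S x)‖ ≤ opnormA (adjoint R ∘L R) S := by
  refine le_csSup ⟨b, ?_⟩ ⟨x, by rwa [vnormA_adjoint_comp_self], by rw [vnormA_adjoint_comp_self]⟩
  rintro _ ⟨y, hy, rfl⟩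
  rw [vnormA_adjoint_comp_self] at hy ⊢
  exact h y hy

lemma IsAdjointWrt.norm_inner_le_wA (h : IsAdjointWrt R T Ts) {x : H} (hx : ‖R x‖ = 1) :
    ‖⟪R (T x), R x⟫_ℂ‖ ≤ wA (adjoint R ∘L R) T := by
  have hbound : ∀ y, ‖R y‖ = 1 → ‖⟪R (T y), R y⟫_ℂ‖ ≤ √‖Ts * T‖ := fun y hy =>
    (norm_inner_le_norm _ _).trans (by rw [hy, mul_one]; exact h.norm_apply_le_sqrt hy)
  refine le_csSup ⟨√‖Ts * T‖, ?_⟩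
    ⟨x, by rwa [vnormA_adjoint_comp_self], by rw [innA_adjoint_comp_self]⟩
  rintro _ ⟨y, hy, rfl⟩
  rw [vnormA_adjoint_comp_self] at hy
  rw [innA_adjoint_comp_self]
  exact hbound y hy

lemma IsAdjointWrt.norm_apply_le_wA (hT : IsAdjointWrt R T Ts) (hS : IsAdjointWrt R S S)
    (hST : ∀ u, ‖⟪R (S u), R u⟫_ℂ‖ ≤ ‖⟪R (T u), R u⟫_ℂ‖) {x : H} (hx : ‖R x‖ = 1) :
    ‖R (S x)‖ ≤ wA (adjoint R ∘L R) T :=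
  hS.norm_apply_le_of_norm_inner_le (fun u => (hST u).trans <|
    norm_inner_le_mul_norm_sq (fun _ hy => hT.norm_inner_le_wA hy) u) hx

end Suprema

end

theorem stmt0 (A T Ts : H →L[ℂ] H) (hA : A.IsPositive) (hTs : IsAAdjoint A T Ts) :
    wA A T ≥ opnormA A T / 2 + |opnormA A (ReA T Ts) - opnormA A (ImA T Ts)| / 2 := by
  obtain ⟨R, rfl⟩ := exists_eq_adjoint_comp_self hA
  set A := adjoint R ∘L R
  have hT := hTs.isAdjointWrt
  have hRe : ∀ x, ‖R x‖ = 1 → ‖R (ReA T Ts x)‖ ≤ wA A T :=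
    fun _ => hT.norm_apply_le_wA hT.reA fun u => by
      rw [hT.inner_reA_apply, norm_real, Real.norm_eq_abs]; exact abs_re_le_norm _
  have hIm : ∀ x, ‖R x‖ = 1 → ‖R (ImA T Ts x)‖ ≤ wA A T :=
    fun _ => hT.norm_apply_le_wA hT.imA fun u => by
      rw [hT.inner_imA_apply, norm_neg, norm_real, Real.norm_eq_abs]; exact abs_im_le_norm _
  have hsum : opnormA A T ≤ opnormA A (ReA T Ts) + opnormA A (ImA T Ts) := by
    refine opnormA_adjoint_comp_self_le (add_nonneg (opnormA_nonneg _ _) (opnormA_nonneg _ _))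
      fun x hx => ?_
    calc ‖R (T x)‖ = ‖R (ReA T Ts x) + I • R (ImA T Ts x)‖ := by
          rw [← map_smul, ← map_add, ← smul_apply, ← add_apply, reA_add_I_smul_imA]
      _ ≤ ‖R (ReA T Ts x)‖ + ‖R (ImA T Ts x)‖ := by
          grw [norm_add_le, norm_smul, norm_I, one_mul]
      _ ≤ _ := add_le_add (norm_apply_le_opnormA hRe hx) (norm_apply_le_opnormA hIm hx)
  have hRe' := opnormA_adjoint_comp_self_le (wA_nonneg _ _) hRe
  have hIm' := opnormA_adjoint_comp_self_le (wA_nonneg _ _) hIm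
  rcases abs_cases (opnormA A (ReA T Ts) - opnormA A (ImA T Ts)) with ⟨h, -⟩ | ⟨h, -⟩ <;>
    rw [h] <;> linarith
end
end

section
/- Let T be a bounded linear operator on H admitting an A-adjoint T♯. Then w_A(T) = √( (1/4)‖T♯∘T + T∘T♯‖_A ) if and only if for every θ ∈ ℝ one has ‖(e^{iθ}T + e^{−iθ}T♯)/2‖_A² = ‖(e^{iθ}T − e^{−iθ}T♯)/(2i)‖_A² = (1/4)‖T♯∘T + T∘T♯‖_A. -/
/-
Write `R θ = Re_A(e^{iθ} T)`; then `Im_A(e^{iθ} T) = R (θ - π/2)`. Each `R θ` is `A`-selfadjoint, so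
polarization gives `‖R θ‖_A ≤ w_A(R θ) ≤ w_A(T)`, while taking `θ = arg ⟨T x, x⟩_A` gives
`|⟨T x, x⟩_A| = ⟨R θ x, x⟩_A`, hence `w_A(T) = sup_θ ‖R θ‖_A`. Since
`(R θ)² + (Im_A(e^{iθ} T))² = (T♯T + TT♯)/2`, we get
`¼‖T♯T + TT♯‖_A ≤ ½(‖Re_A(e^{iθ} T)‖_A² + ‖Im_A(e^{iθ} T)‖_A²) ≤ w_A(T)²`, which forces both
equalities when `w_A(T)² = ¼‖T♯T + TT♯‖_A`; conversely, if `‖R θ‖_A` is the same for every `θ`,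
then `w_A(T)` is that value.

The `A`-seminorm is `‖A^{1/2} x‖`, so the Hilbert-space inequalities carry over. Operators with an
`A`-adjoint are `A`-bounded: for `A`-selfadjoint `G`, `‖G x‖_A² ≤ ‖G² x‖_A ‖x‖_A`, and iterating
along the powers `G ^ 2 ^ n` gives `‖G x‖_A ≤ ‖G‖ ‖x‖_A`.
-/


noncomputable section

open Complex ContinuousLinearMap

variable {H : Type*} [NormedAddCommGroup H] [InnerProductSpace ℂ H] [CompleteSpace H]

lemma le_of_forall_pow_two_pow_mul_le {a b c C : ℝ} (hb : 0 ≤ b) (hc : 0 < c)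
    (h : ∀ n : ℕ, a ^ 2 ^ n * c ≤ C * b ^ 2 ^ n) : a ≤ b := by
  by_contra! hba
  rcases hb.eq_or_lt with rfl | hb
  · have h0 := h 0
    simp only [pow_zero, pow_one, mul_zero] at h0
    nlinarith
  · have hq : 1 < a / b := (one_lt_div hb).mpr hba
    obtain ⟨n, hn⟩ := pow_unbounded_of_one_lt (C / c) hq
    have hle : (a / b) ^ 2 ^ n ≤ C / c := by
      rw [div_pow, div_le_div_iff₀ (by positivity) hc]
      exact h n
    exact (hn.trans_le ((pow_le_pow_right₀ hq.le Nat.lt_two_pow_self.le).trans hle)).false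

section

set_option linter.unusedSectionVars false

variable {A : H →L[ℂ] H}

lemma innA_eq_inner_sqrt (hA : A.IsPositive) (x y : H) :
    innA A x y = inner ℂ (CFC.sqrt A x) (CFC.sqrt A y) := by
  have hS : IsSelfAdjoint (CFC.sqrt A) := (CFC.sqrt_nonneg A).isSelfAdjoint
  have hSS : CFC.sqrt A * CFC.sqrt A = A :=
    CFC.sqrt_mul_sqrt_self A ((nonneg_iff_isPositive A).mpr hA)
  rw [innA, ← adjoint_inner_left, hS.adjoint_eq, ← mul_apply_eq_comp, hSS]

lemma vnormA_eq_norm_sqrt (hA : A.IsPositive) (x : H) : vnormA A x = ‖CFC.sqrt A x‖ := by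
  rw [vnormA, innA_eq_inner_sqrt hA, inner_self_eq_norm_sq_to_K]
  norm_cast
  exact Real.sqrt_sq (norm_nonneg _)

lemma vnormA_nonneg (x : H) : 0 ≤ vnormA A x := Real.sqrt_nonneg _

lemma innA_self (hA : A.IsPositive) (x : H) : innA A x x = (vnormA A x : ℂ) ^ 2 := by
  rw [innA_eq_inner_sqrt hA, inner_self_eq_norm_sq_to_K, vnormA_eq_norm_sqrt hA]
  rfl

lemma conj_innA (hA : A.IsPositive) (x y : H) : starRingEnd ℂ (innA A x y) = innA A y x := by
  rw [innA_eq_inner_sqrt hA, innA_eq_inner_sqrt hA, inner_conj_symm]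

lemma innA_smul_left (c : ℂ) (x y : H) : innA A (c • x) y = starRingEnd ℂ c * innA A x y := by
  rw [innA, map_smul, inner_smul_left, innA]

lemma norm_innA_le (hA : A.IsPositive) (x y : H) : ‖innA A x y‖ ≤ vnormA A x * vnormA A y := by
  rw [innA_eq_inner_sqrt hA, vnormA_eq_norm_sqrt hA, vnormA_eq_norm_sqrt hA]
  exact norm_inner_le_norm _ _

lemma vnormA_add_le (hA : A.IsPositive) (x y : H) : vnormA A (x + y) ≤ vnormA A x + vnormA A y := by
  simp only [vnormA_eq_norm_sqrt hA, map_add]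
  exact norm_add_le _ _

lemma vnormA_smul (hA : A.IsPositive) (c : ℂ) (x : H) : vnormA A (c • x) = ‖c‖ * vnormA A x := by
  simp only [vnormA_eq_norm_sqrt hA, map_smul, norm_smul]

lemma vnormA_add_sq_add_vnormA_sub_sq (hA : A.IsPositive) (x y : H) :
    vnormA A (x + y) ^ 2 + vnormA A (x - y) ^ 2 = 2 * (vnormA A x ^ 2 + vnormA A y ^ 2) := by
  simp only [vnormA_eq_norm_sqrt hA, map_add, map_sub]
  exact parallelogram_law_with_norm ℂ _ _

lemma vnormA_le_norm (hA : A.IsPositive) (x : H) : vnormA A x ≤ ‖CFC.sqrt A‖ * ‖x‖ := by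
  rw [vnormA_eq_norm_sqrt hA]
  exact le_opNorm _ _

lemma exists_eq_smul_of_vnormA_ne_zero (hA : A.IsPositive) {x : H} (hx : vnormA A x ≠ 0) :
    ∃ (r : ℝ) (u : H), 0 < r ∧ vnormA A u = 1 ∧ x = (r : ℂ) • u := by
  refine ⟨vnormA A x, ((vnormA A x)⁻¹ : ℂ) • x, (vnormA_nonneg x).lt_of_ne' hx, ?_, ?_⟩
  · rw [vnormA_smul hA, norm_inv, Complex.norm_real, Real.norm_of_nonneg (vnormA_nonneg x),
      inv_mul_cancel₀ hx]
  · rw [smul_smul, mul_inv_cancel₀ (by exact_mod_cast hx), one_smul]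

namespace IsAAdjoint

variable {V W V' W' G : H →L[ℂ] H}

lemma innA_apply_left (h : IsAAdjoint A V W) (x y : H) : innA A (W x) y = innA A x (V y) := by
  rw [innA, ← comp_apply, h, comp_apply, adjoint_inner_left, innA]

lemma symm (hA : IsSelfAdjoint A) (h : IsAAdjoint A V W) : IsAAdjoint A W V := by
  have h' := congrArg adjoint h
  rwa [adjoint_comp, adjoint_comp, adjoint_adjoint, hA.adjoint_eq, eq_comm] at h'

lemma comp (h : IsAAdjoint A V W) (h' : IsAAdjoint A V' W') :
    IsAAdjoint A (V.comp V') (W'.comp W) := by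
  rw [IsAAdjoint, ← comp_assoc, h', comp_assoc, h, ← comp_assoc, adjoint_comp]

lemma pow (hG : IsAAdjoint A G G) (n : ℕ) : IsAAdjoint A (G ^ n) (G ^ n) := by
  induction n with
  | zero => rw [IsAAdjoint, pow_zero, one_def, adjoint_id, id_comp, comp_id]
  | succ n ih =>
    have h := ih.comp hG
    rwa [← mul_def, ← mul_def, ← pow_succ, ← pow_succ'] at h

lemma smul (h : IsAAdjoint A V W) (c : ℂ) : IsAAdjoint A (c • V) (starRingEnd ℂ c • W) := by
  rw [IsAAdjoint, comp_smulₛₗ, h, map_smulₛₗ, smul_comp]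
  simp

lemma add (h : IsAAdjoint A V W) (h' : IsAAdjoint A V' W') : IsAAdjoint A (V + V') (W + W') := by
  rw [IsAAdjoint, comp_add, h, h', map_add, add_comp]

lemma sub (h : IsAAdjoint A V W) (h' : IsAAdjoint A V' W') : IsAAdjoint A (V - V') (W - W') := by
  rw [IsAAdjoint, comp_sub, h, h', map_sub, sub_comp]

lemma reA (hA : IsSelfAdjoint A) (h : IsAAdjoint A V W) : IsAAdjoint A (ReA V W) (ReA V W) := by
  simpa [ReA, add_comm W V, map_ofNat] using (h.add (h.symm hA)).smul (2 : ℂ)⁻¹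

lemma imA (hA : IsSelfAdjoint A) (h : IsAAdjoint A V W) : IsAAdjoint A (ImA V W) (ImA V W) := by
  simpa [ImA, map_ofNat, ← smul_neg] using (h.sub (h.symm hA)).smul (2 * I)⁻¹

lemma vnormA_apply_sq_le (hA : A.IsPositive) (h : IsAAdjoint A V W) (x : H) :
    vnormA A (V x) ^ 2 ≤ vnormA A (W (V x)) * vnormA A x := by
  have h2 : ((vnormA A (V x) ^ 2 : ℝ) : ℂ) = innA A (W (V x)) x := by
    rw [h.innA_apply_left, ofReal_pow, innA_self hA]
  calc vnormA A (V x) ^ 2 = ‖innA A (W (V x)) x‖ := by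
        rw [← h2, norm_real, Real.norm_of_nonneg (sq_nonneg _)]
    _ ≤ vnormA A (W (V x)) * vnormA A x := norm_innA_le hA _ _

-- The factor `‖x‖_A` on the left avoids the exponent `2 ^ n - 1` on the right.
lemma vnormA_apply_pow_le (hA : A.IsPositive) (hG : IsAAdjoint A G G) (n : ℕ) (x : H) :
    vnormA A (G x) ^ 2 ^ n * vnormA A x ≤ vnormA A ((G ^ 2 ^ n) x) * vnormA A x ^ 2 ^ n := by
  induction n with
  | zero => simp
  | succ n ih =>
    set s := vnormA A x
    have hs : 0 ≤ s := vnormA_nonneg x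
    have hstep : vnormA A ((G ^ 2 ^ n) x) ^ 2 ≤ vnormA A ((G ^ 2 ^ (n + 1)) x) * s := by
      simpa only [← mul_apply_eq_comp, ← pow_add, ← two_mul, ← pow_succ'] using
        (hG.pow (2 ^ n)).vnormA_apply_sq_le hA x
    have hsq : (vnormA A (G x) ^ 2 ^ (n + 1) * s) * s ≤
        (vnormA A ((G ^ 2 ^ (n + 1)) x) * s ^ 2 ^ (n + 1)) * s := by
      calc (vnormA A (G x) ^ 2 ^ (n + 1) * s) * s = (vnormA A (G x) ^ 2 ^ n * s) ^ 2 := by ring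
        _ ≤ (vnormA A ((G ^ 2 ^ n) x) * s ^ 2 ^ n) ^ 2 :=
          pow_le_pow_left₀ (mul_nonneg (pow_nonneg (vnormA_nonneg _) _) hs) ih 2
        _ = vnormA A ((G ^ 2 ^ n) x) ^ 2 * s ^ 2 ^ (n + 1) := by ring
        _ ≤ (vnormA A ((G ^ 2 ^ (n + 1)) x) * s) * s ^ 2 ^ (n + 1) := by gcongr
        _ = (vnormA A ((G ^ 2 ^ (n + 1)) x) * s ^ 2 ^ (n + 1)) * s := by ring
    rcases hs.eq_or_lt with hs0 | hs0
    · rw [← hs0, zero_pow (by positivity)]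
      simp
    · exact le_of_mul_le_mul_right hsq hs0

lemma vnormA_apply_le_norm_mul (hA : A.IsPositive) (hG : IsAAdjoint A G G) (x : H) :
    vnormA A (G x) ≤ ‖G‖ * vnormA A x := by
  rcases (vnormA_nonneg (A := A) x).eq_or_lt with hx | hx
  · have h := hG.vnormA_apply_sq_le hA x
    rw [← hx, mul_zero] at h
    rw [← hx, mul_zero, ← sq_eq_zero_iff.mp (le_antisymm h (sq_nonneg _))]
  refine le_of_forall_pow_two_pow_mul_le (by positivity) hx
    (C := ‖CFC.sqrt A‖ * ‖x‖) fun n => (hG.vnormA_apply_pow_le hA n x).trans ?_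
  calc vnormA A ((G ^ 2 ^ n) x) * vnormA A x ^ 2 ^ n
      ≤ ‖CFC.sqrt A‖ * (‖G ^ 2 ^ n‖ * ‖x‖) * vnormA A x ^ 2 ^ n := by
        gcongr
        exact (vnormA_le_norm hA _).trans (by gcongr; exact le_opNorm _ _)
    _ ≤ ‖CFC.sqrt A‖ * (‖G‖ ^ 2 ^ n * ‖x‖) * vnormA A x ^ 2 ^ n := by
        gcongr
        exact norm_pow_le' _ (by positivity)
    _ = ‖CFC.sqrt A‖ * ‖x‖ * (‖G‖ * vnormA A x) ^ 2 ^ n := by ring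

lemma vnormA_apply_le (hA : A.IsPositive) (h : IsAAdjoint A V W) (x : H) :
    vnormA A (V x) ≤ √‖W.comp V‖ * vnormA A x := by
  have hWV := (h.symm hA.isSelfAdjoint).comp h
  have hsq : vnormA A (V x) ^ 2 ≤ (√‖W.comp V‖ * vnormA A x) ^ 2 := by
    rw [mul_pow, Real.sq_sqrt (norm_nonneg _)]
    calc vnormA A (V x) ^ 2 ≤ vnormA A (W (V x)) * vnormA A x := h.vnormA_apply_sq_le hA x
      _ ≤ ‖W.comp V‖ * vnormA A x * vnormA A x := by
        gcongr
        · exact vnormA_nonneg x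
        · exact hWV.vnormA_apply_le_norm_mul hA x
      _ = ‖W.comp V‖ * vnormA A x ^ 2 := by ring
  exact le_of_pow_le_pow_left₀ two_ne_zero (mul_nonneg (Real.sqrt_nonneg _) (vnormA_nonneg x)) hsq

end IsAAdjoint

section OperatorSeminorm

variable {V W : H →L[ℂ] H}

lemma opnormA_nonneg_s6 : 0 ≤ opnormA A V :=
  Real.sSup_nonneg <| by rintro _ ⟨x, -, rfl⟩; exact vnormA_nonneg _

lemma wA_nonneg_s6 : 0 ≤ wA A V :=
  Real.sSup_nonneg <| by rintro _ ⟨x, -, rfl⟩; exact norm_nonneg _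

-- Via `Real.sSup_le`, so no unit vector is needed: for `A = 0` the unit `A`-sphere is empty.
lemma opnormA_le {M : ℝ} (hM : 0 ≤ M) (h : ∀ x, vnormA A x = 1 → vnormA A (V x) ≤ M) :
    opnormA A V ≤ M :=
  Real.sSup_le (by rintro _ ⟨x, hx, rfl⟩; exact h x hx) hM

lemma wA_le {M : ℝ} (hM : 0 ≤ M) (h : ∀ x, vnormA A x = 1 → ‖innA A (V x) x‖ ≤ M) :
    wA A V ≤ M :=
  Real.sSup_le (by rintro _ ⟨x, hx, rfl⟩; exact h x hx) hM

lemma le_opnormA (hA : A.IsPositive) (h : IsAAdjoint A V W) {x : H} (hx : vnormA A x = 1) :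
    vnormA A (V x) ≤ opnormA A V := by
  refine le_csSup ⟨√‖W.comp V‖, ?_⟩ ⟨x, hx, rfl⟩
  rintro _ ⟨y, hy, rfl⟩
  simpa [hy] using h.vnormA_apply_le hA y

lemma norm_innA_le_opnormA (hA : A.IsPositive) (h : IsAAdjoint A V W) {x : H}
    (hx : vnormA A x = 1) : ‖innA A (V x) x‖ ≤ opnormA A V :=
  (norm_innA_le hA _ _).trans (by rw [hx, mul_one]; exact le_opnormA hA h hx)

lemma le_wA (hA : A.IsPositive) (h : IsAAdjoint A V W) {x : H} (hx : vnormA A x = 1) :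
    ‖innA A (V x) x‖ ≤ wA A V :=
  le_csSup ⟨opnormA A V, by rintro _ ⟨y, hy, rfl⟩; exact norm_innA_le_opnormA hA h hy⟩
    ⟨x, hx, rfl⟩

lemma vnormA_apply_le_opnormA_mul (hA : A.IsPositive) (h : IsAAdjoint A V W) (x : H) :
    vnormA A (V x) ≤ opnormA A V * vnormA A x := by
  by_cases hx : vnormA A x = 0
  · simpa [hx] using h.vnormA_apply_le hA x
  obtain ⟨r, u, hr, hu, rfl⟩ := exists_eq_smul_of_vnormA_ne_zero hA hx
  rw [map_smul, vnormA_smul hA, vnormA_smul hA, hu, norm_real, Real.norm_of_nonneg hr.le,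
    mul_one, mul_comm]
  exact mul_le_mul_of_nonneg_right (le_opnormA hA h hu) hr.le

lemma norm_innA_le_wA_mul (hA : A.IsPositive) (h : IsAAdjoint A V W) (x : H) :
    ‖innA A (V x) x‖ ≤ wA A V * vnormA A x ^ 2 := by
  by_cases hx : vnormA A x = 0
  · have h0 := (norm_innA_le hA (V x) x).trans_eq (by rw [hx, mul_zero])
    simpa [hx] using h0
  obtain ⟨r, u, hr, hu, rfl⟩ := exists_eq_smul_of_vnormA_ne_zero hA hx
  rw [map_smul, innA_smul_left, innA, inner_smul_right, ← innA, norm_mul, norm_mul,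
    Complex.norm_conj, vnormA_smul hA, hu, norm_real, Real.norm_of_nonneg hr.le, ← mul_assoc,
    ← sq, mul_one, mul_comm]
  gcongr
  exact le_wA hA h hu

end OperatorSeminorm

section SelfAdjoint

variable {R : H →L[ℂ] H}

lemma IsAAdjoint.re_innA_le_wA (hA : A.IsPositive) (hR : IsAAdjoint A R R) {x y : H}
    (hx : vnormA A x = 1) (hy : vnormA A y = 1) : (innA A (R x) y).re ≤ wA A R := by
  have hpol : 4 * (innA A (R x) y).re =
      (innA A (R (x + y)) (x + y)).re - (innA A (R (x - y)) (x - y)).re := by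
    have hyx : innA A (R y) x = starRingEnd ℂ (innA A (R x) y) := by
      rw [hR.innA_apply_left, conj_innA hA]
    have h := congrArg Complex.re (show innA A (R (x + y)) (x + y) - innA A (R (x - y)) (x - y) =
        2 * innA A (R x) y + 2 * innA A (R y) x by
      simp only [innA, map_add, map_sub, inner_add_left, inner_add_right, inner_sub_left,
        inner_sub_right]
      ring)
    rw [hyx] at h
    simp only [sub_re, add_re, re_ofNat, mul_re, im_ofNat, conj_re, zero_mul, sub_zero] at h
    linarith
  have hplus := (re_le_norm _).trans (norm_innA_le_wA_mul hA hR (x + y))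
  have hminus := ((neg_le_abs _).trans (abs_re_le_norm _)).trans (norm_innA_le_wA_mul hA hR (x - y))
  have hpar := vnormA_add_sq_add_vnormA_sub_sq hA x y
  rw [hx, hy] at hpar
  nlinarith [wA_nonneg_s6 (A := A) (V := R)]

lemma IsAAdjoint.opnormA_le_wA (hA : A.IsPositive) (hR : IsAAdjoint A R R) :
    opnormA A R ≤ wA A R := by
  refine opnormA_le wA_nonneg_s6 fun x hx => ?_
  by_cases hRx : vnormA A (R x) = 0
  · exact hRx ▸ wA_nonneg_s6
  obtain ⟨r, u, hr, hu, hRxu⟩ := exists_eq_smul_of_vnormA_ne_zero hA hRx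
  have h := hR.re_innA_le_wA hA hx hu
  rw [hRxu, innA_smul_left, conj_ofReal, innA_self hA, hu] at h
  rw [hRxu, vnormA_smul hA, hu, norm_real, Real.norm_of_nonneg hr.le, mul_one]
  simpa using h

end SelfAdjoint

section ReIm

variable {V W : H →L[ℂ] H}

lemma IsAAdjoint.innA_reA_apply_self (hA : A.IsPositive) (h : IsAAdjoint A V W) (x : H) :
    innA A (ReA V W x) x = (innA A (V x) x).re := by
  rw [ReA, smul_apply, add_apply, innA_smul_left, innA, map_add, inner_add_left, ← innA, ← innA,
    h.innA_apply_left, ← conj_innA hA (V x) x, add_conj, map_inv₀, map_ofNat]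
  push_cast
  ring

lemma comp_add_comp_eq_two_smul (V W : H →L[ℂ] H) :
    W.comp V + V.comp W = (2 : ℂ) • ((ReA V W).comp (ReA V W) + (ImA V W).comp (ImA V W)) := by
  ext x
  simp only [ReA, ImA, add_apply, comp_apply, smul_apply, sub_apply, map_add, map_sub, map_smul,
    smul_add, smul_sub, smul_smul]
  match_scalars <;> ring_nf <;> simp only [inv_I, neg_sq, I_sq] <;> ring

lemma IsAAdjoint.opnormA_comp_add_comp_le (hA : A.IsPositive) (h : IsAAdjoint A V W) :
    opnormA A (W.comp V + V.comp W) ≤ 2 * (opnormA A (ReA V W) ^ 2 + opnormA A (ImA V W) ^ 2) := by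
  have hR := h.reA hA.isSelfAdjoint
  have hI := h.imA hA.isSelfAdjoint
  have hsq {S : H →L[ℂ] H} (hS : IsAAdjoint A S S) {x : H} (hx : vnormA A x = 1) :
      vnormA A (S (S x)) ≤ opnormA A S ^ 2 := by
    calc vnormA A (S (S x)) ≤ opnormA A S * vnormA A (S x) :=
          vnormA_apply_le_opnormA_mul hA hS _
      _ ≤ opnormA A S * opnormA A S := by gcongr; exacts [opnormA_nonneg_s6, le_opnormA hA hS hx]
      _ = opnormA A S ^ 2 := (sq _).symm
  refine opnormA_le (by positivity) fun x hx => ?_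
  rw [comp_add_comp_eq_two_smul, smul_apply, vnormA_smul hA, norm_ofNat]
  gcongr
  exact (vnormA_add_le hA _ _).trans (add_le_add (hsq hR hx) (hsq hI hx))

end ReIm

section Rotation

variable {T Ts : H →L[ℂ] H}

lemma conj_exp_ofReal_mul_I (θ : ℝ) : starRingEnd ℂ (exp (θ * I)) = exp (-θ * I) := by
  rw [← exp_conj, map_mul, conj_ofReal, conj_I, mul_neg, neg_mul]

lemma IsAAdjoint.rotate (h : IsAAdjoint A T Ts) (θ : ℝ) :
    IsAAdjoint A (exp (θ * I) • T) (exp (-θ * I) • Ts) :=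
  conj_exp_ofReal_mul_I θ ▸ h.smul _

lemma rotate_comp_add_comp (T Ts : H →L[ℂ] H) (θ : ℝ) :
    (exp (-θ * I) • Ts).comp (exp (θ * I) • T) + (exp (θ * I) • T).comp (exp (-θ * I) • Ts) =
      Ts.comp T + T.comp Ts := by
  have h : exp (-θ * I) * exp (θ * I) = 1 := by rw [← exp_add, neg_mul, neg_add_cancel, exp_zero]
  rw [smul_comp, comp_smul, smul_smul, smul_comp, comp_smul, smul_smul, mul_comm (exp (θ * I)), h,
    one_smul, one_smul]

lemma imA_rotate_eq_reA_rotate (T Ts : H →L[ℂ] H) (θ : ℝ) :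
    ImA (exp (θ * I) • T) (exp (-θ * I) • Ts) =
      ReA (exp ((θ - Real.pi / 2 : ℝ) * I) • T) (exp (-(θ - Real.pi / 2 : ℝ) * I) • Ts) := by
  have h₁ : exp ((θ - Real.pi / 2 : ℝ) * I) = -I * exp (θ * I) := by
    rw [ofReal_sub, sub_mul, exp_sub, ofReal_div, ofReal_ofNat, exp_pi_div_two_mul_I, div_I]
    ring
  have h₂ : exp (-(θ - Real.pi / 2 : ℝ) * I) = I * exp (-θ * I) := by
    rw [ofReal_sub, neg_sub, sub_mul, exp_sub, ofReal_div, ofReal_ofNat, exp_pi_div_two_mul_I,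
      neg_mul, exp_neg, div_eq_mul_inv]
  rw [ImA, ReA, h₁, h₂, mul_inv, inv_I]
  module

lemma IsAAdjoint.opnormA_reA_rotate_le_wA (hA : A.IsPositive) (h : IsAAdjoint A T Ts) (θ : ℝ) :
    opnormA A (ReA (exp (θ * I) • T) (exp (-θ * I) • Ts)) ≤ wA A T := by
  have hθ := h.rotate θ
  refine ((hθ.reA hA.isSelfAdjoint).opnormA_le_wA hA).trans (wA_le wA_nonneg_s6 fun x hx => ?_)
  rw [hθ.innA_reA_apply_self hA, norm_real, Real.norm_eq_abs]
  calc |(innA A ((exp (θ * I) • T) x) x).re| ≤ ‖innA A ((exp (θ * I) • T) x) x‖ :=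
        abs_re_le_norm _
    _ = ‖innA A (T x) x‖ := by
        rw [smul_apply, innA_smul_left, norm_mul, Complex.norm_conj, norm_exp_ofReal_mul_I, one_mul]
    _ ≤ wA A T := le_wA hA h hx

lemma IsAAdjoint.wA_le_of_forall_opnormA_reA_rotate_le (hA : A.IsPositive) (h : IsAAdjoint A T Ts)
    {M : ℝ} (hM : 0 ≤ M) (hR : ∀ θ : ℝ, opnormA A (ReA (exp (θ * I) • T) (exp (-θ * I) • Ts)) ≤ M) :
    wA A T ≤ M := by
  refine wA_le hM fun x hx => ?_
  set θ := (innA A (T x) x).arg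
  have hθ := h.rotate θ
  have hx' : innA A ((exp (θ * I) • T) x) x = ‖innA A (T x) x‖ := by
    conv_lhs => rw [smul_apply, innA_smul_left, ← norm_mul_exp_arg_mul_I (innA A (T x) x)]
    rw [conj_exp_ofReal_mul_I, mul_left_comm, ← Complex.exp_add, neg_mul, neg_add_cancel,
      Complex.exp_zero, mul_one]
  calc ‖innA A (T x) x‖ = ‖innA A (ReA (exp (θ * I) • T) (exp (-θ * I) • Ts) x) x‖ := by
        rw [hθ.innA_reA_apply_self hA, hx', ofReal_re, norm_real, norm_norm]
    _ ≤ opnormA A (ReA (exp (θ * I) • T) (exp (-θ * I) • Ts)) :=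
        norm_innA_le_opnormA hA (hθ.reA hA.isSelfAdjoint) hx
    _ ≤ M := hR θ

end Rotation

end

theorem stmt6 (A T Ts : H →L[ℂ] H) (hA : A.IsPositive) (hTs : IsAAdjoint A T Ts) :
    wA A T = Real.sqrt ((1 / 4) * opnormA A (Ts.comp T + T.comp Ts)) ↔
      ∀ θ : ℝ,
        opnormA A (ReA (Complex.exp ((θ : ℂ) * Complex.I) • T)
            (Complex.exp (-(θ : ℂ) * Complex.I) • Ts)) ^ 2 =
          (1 / 4) * opnormA A (Ts.comp T + T.comp Ts) ∧
        opnormA A (ImA (Complex.exp ((θ : ℂ) * Complex.I) • T)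
            (Complex.exp (-(θ : ℂ) * Complex.I) • Ts)) ^ 2 =
          (1 / 4) * opnormA A (Ts.comp T + T.comp Ts) := by
  have hsum (θ : ℝ) := rotate_comp_add_comp T Ts θ ▸ (hTs.rotate θ).opnormA_comp_add_comp_le hA
  set D := opnormA A (Ts.comp T + T.comp Ts)
  have hRw := hTs.opnormA_reA_rotate_le_wA hA
  have hIw (θ : ℝ) := imA_rotate_eq_reA_rotate T Ts θ ▸ hRw (θ - Real.pi / 2)
  constructor
  · intro hw θ
    have hw2 : wA A T ^ 2 = 1 / 4 * D := by
      rw [hw, Real.sq_sqrt (mul_nonneg (by norm_num) opnormA_nonneg_s6)]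
    have hR := pow_le_pow_left₀ opnormA_nonneg_s6 (hRw θ) 2
    have hI := pow_le_pow_left₀ opnormA_nonneg_s6 (hIw θ) 2
    constructor <;> linarith [hsum θ]
  · intro h
    have hR (θ : ℝ) : opnormA A (ReA (exp (θ * I) • T) (exp (-θ * I) • Ts)) = √(1 / 4 * D) := by
      rw [← (h θ).1, Real.sqrt_sq opnormA_nonneg_s6]
    exact le_antisymm (hTs.wA_le_of_forall_opnormA_reA_rotate_le hA (Real.sqrt_nonneg _)
      fun θ => (hR θ).le) ((hR 0).symm.le.trans (hRw 0))
end
end
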